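/- Let N be a left H-module and equip Hom_k(H, N) with the left H-module structure (x·φ)(h) = x⁽²⁾·φ(S(x⁽³⁾) h x⁽¹⁾). Define ς : N → Hom_k(H, N) by ς(n)(h) = h·n, and m(Φ)(h) = Φ(h⁽¹⁾)(h⁽²⁾) for k-linear Φ : H → Hom_k(H, N). Then: (i) ς is H-linear; (ii) ς is central with respect to m: for every φ ∈ Hom_k(H, N), m(h ↦ h·φ) = m(h ↦ ς(φ(h))), both sides being h ↦ h⁽²⁾·φ(h⁽¹⁾). -/

import Mathlib

/-!
# Statement 10

`k` a field, `H` a Hopf algebra over `k`, `N` a left `H`-module.  Equip `Hom_k(H, N)` with the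
left `H`-module structure `(x · φ)(h) = x⁽²⁾ • φ (S(x⁽³⁾) h x⁽¹⁾)` (the `A = H`, both coactions
`= Δ`, case of the monad on modules).  Define `ς : N → Hom_k(H, N)`, `ς(n)(h) = h • n`, and let
`m(Φ)(h) = Φ(h⁽¹⁾)(h⁽²⁾)`.  Then (i) `ς` is `H`-linear, and (ii) `ς` is central with respect
to `m`: `m(h ↦ h · φ) = m(h ↦ ς(φ(h)))`, both sides being `h ↦ h⁽²⁾ • φ(h⁽¹⁾)`.
-/

open TensorProduct

noncomputable section

variable (k : Type) [Field k]

/-- The curried action of a `k`-algebra `R` on a module `V`, as a `k`-bilinear map. -/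
def csmul (R : Type) [Ring R] [Algebra k R] (V : Type) [AddCommGroup V] [Module k V]
    [Module R V] [IsScalarTower k R V] [SMulCommClass k R V] : R →ₗ[k] V →ₗ[k] V where
  toFun r :=
    { toFun := fun v => r • v
      map_add' := smul_add r
      map_smul' := fun c v => (smul_comm c r v).symm }
  map_add' r r' := LinearMap.ext fun v => add_smul r r' v
  map_smul' c r := LinearMap.ext fun v => smul_assoc c r v

variable (H : Type) [Ring H] [HopfAlgebra k H]

/-- `H ⊗ H →ₗ End_k(H)`, `u ⊗ v ↦ (x ↦ u * x * v)`. -/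
def sandwich : H ⊗[k] H →ₗ[k] (H →ₗ[k] H) :=
  (TensorProduct.lift (LinearMap.llcomp k H H H)) ∘ₗ
    (TensorProduct.map (LinearMap.mul k H) (LinearMap.mul k H).flip)

/-- `H ⊗ H →ₗ End_k(Hom_k(H, W))`, `u ⊗ v ↦ (φ ↦ (x ↦ φ (u * x * v)))`. -/
def sandwichHom (W : Type) [AddCommGroup W] [Module k W] :
    H ⊗[k] H →ₗ[k] (H →ₗ[k] W) →ₗ[k] (H →ₗ[k] W) :=
  (LinearMap.llcomp k H H W).flip ∘ₗ sandwich k H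

/-- `H →ₗ H ⊗ (H ⊗ H)`, `x ↦ x⁽²⁾ ⊗ (S(x⁽³⁾) ⊗ x⁽¹⁾)`. -/
def deltaSH : H →ₗ[k] H ⊗[k] (H ⊗[k] H) :=
  (LinearMap.lTensor H (LinearMap.rTensor H (HopfAlgebra.antipode (R := k)))) ∘ₗ
    (LinearMap.lTensor H (TensorProduct.comm k H H).toLinearMap) ∘ₗ
    (TensorProduct.assoc k H H H).toLinearMap ∘ₗ
    (LinearMap.rTensor H (TensorProduct.comm k H H).toLinearMap) ∘ₗ
    (LinearMap.rTensor H (Coalgebra.comul (R := k))) ∘ₗ (Coalgebra.comul (R := k))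

variable (N : Type) [AddCommGroup N] [Module k N] [Module H N]
  [IsScalarTower k H N] [SMulCommClass k H N]

/-- The left `H`-module structure on `Hom_k(H, N)`: `(x · φ)(h) = x⁽²⁾ • φ (S(x⁽³⁾) h x⁽¹⁾)`. -/
def hAct : H →ₗ[k] (H →ₗ[k] N) →ₗ[k] (H →ₗ[k] N) :=
  (TensorProduct.lift
      (((LinearMap.llcomp k (H →ₗ[k] N) (H →ₗ[k] N) (H →ₗ[k] N)).comp
          ((LinearMap.llcomp k H N N) ∘ₗ (csmul k H N))).compl₂ (sandwichHom k H N))) ∘ₗ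
    deltaSH k H

/-- Evaluation `Hom_k(H, W) ⊗ H →ₗ W`. -/
def evalMap (W : Type) [AddCommGroup W] [Module k W] :
    (H →ₗ[k] W) ⊗[k] H →ₗ[k] W :=
  TensorProduct.lift LinearMap.id

/-- `m : Hom_k(H, Hom_k(H, W)) →ₗ Hom_k(H, W)`, `m(Φ)(h) = Φ(h⁽¹⁾)(h⁽²⁾)`. -/
def Mmap (W : Type) [AddCommGroup W] [Module k W] :
    (H →ₗ[k] (H →ₗ[k] W)) →ₗ[k] (H →ₗ[k] W) :=
  (LinearMap.lcomp k W (Coalgebra.comul (R := k) (A := H))) ∘ₗ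
    (LinearMap.llcomp k (H ⊗[k] H) ((H →ₗ[k] W) ⊗[k] H) W (evalMap k H W)) ∘ₗ
    (LinearMap.rTensorHom (M := H) (N := H) (P := H →ₗ[k] W))

/-- `ς : N →ₗ Hom_k(H, N)`, `ς(n)(h) = h • n`. -/
def sigmaMap : N →ₗ[k] (H →ₗ[k] N) := (csmul k H N).flip

/-- `h ↦ h⁽²⁾ • φ(h⁽¹⁾)`. -/
def diagExpr (φ : H →ₗ[k] N) : H →ₗ[k] N :=
  (TensorProduct.lift (csmul k H N)) ∘ₗ (TensorProduct.comm k N H).toLinearMap ∘ₗ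
    (LinearMap.rTensor H φ) ∘ₗ (Coalgebra.comul (R := k))

/-!
The canonical map `β (a ⊗ b) = a⁽¹⁾ ⊗ a⁽²⁾ b` of a Hopf algebra has the right inverse
`β⁻¹ (a ⊗ b) = a⁽¹⁾ ⊗ S(a⁽²⁾) b`, and `β⁻¹ (Δ a) = a ⊗ 1`. The action on `Hom_k(H, N)` reads
`(x · ψ)(h) = T_ψ (β⁻¹ (x ⊗ h))` with `T_ψ (c ⊗ d) = c⁽²⁾ • ψ (d c⁽¹⁾)`. Hence
`m(h ↦ h · φ)(y) = T_φ (β⁻¹ (Δ y)) = T_φ (y ⊗ 1) = y⁽²⁾ • φ (y⁽¹⁾)`, and since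
`T_{ς n} (c ⊗ d) = (c⁽²⁾ d c⁽¹⁾) • n` is `(a ⊗ e ↦ (e a) • n) ∘ β`, we get
`(x · ς n)(h) = (h x) • n = ς (x • n) (h)`.
-/

namespace Coalgebra

variable {R A M : Type*} {ι : Type*} {κ : ι → Type*} [CommSemiring R] [AddCommMonoid A] [Module R A]
  [Coalgebra R A] [AddCommMonoid M] [Module R M]

theorem sum_tmul_smul_counit_eq {a : A} (r : Repr R a ι) (m : M) :
    ∑ i ∈ r.index, r.left i ⊗ₜ[R] (counit (R := R) (r.right i) • m) = a ⊗ₜ m := by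
  simpa only [map_sum, LinearMap.lTensor_tmul, LinearMap.toSpanSingleton_apply, one_smul] using
    congr(LinearMap.lTensor A (LinearMap.toSpanSingleton R M m) $(sum_tmul_counit_eq r))

theorem sum_tmul_apply_tmul_eq {g : A ⊗[R] A →ₗ[R] M} {m : M}
    (hg : ∀ b, g (comul b) = counit (R := R) b • m) {a : A} (r : Repr R a ι)
    (s : (i : ι) → Repr R (r.left i) (κ i)) :
    ∑ i ∈ r.index, ∑ j ∈ (s i).index, (s i).left j ⊗ₜ[R] g ((s i).right j ⊗ₜ r.right i) =
      a ⊗ₜ m := by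
  have := congr(LinearMap.lTensor A g $(sum_tmul_tmul_eq r s fun i => ℛ R (r.right i)))
  simp only [map_sum, LinearMap.lTensor_tmul] at this
  rw [this, ← sum_tmul_smul_counit_eq r m]
  refine Finset.sum_congr rfl fun i _ => ?_
  rw [← TensorProduct.tmul_sum, ← map_sum, (ℛ R (r.right i)).eq, hg]

end Coalgebra

namespace HopfAlgebra

open Coalgebra

variable (R A : Type*) {ι : Type*} {κ : ι → Type*} [CommSemiring R] [Semiring A]

def canonicalMap [Bialgebra R A] : A ⊗[R] A →ₗ[R] A ⊗[R] A :=
  (LinearMap.mul' R A).lTensor A ∘ₗ (TensorProduct.assoc R A A A).toLinearMap ∘ₗ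
    comul.rTensor A

def canonicalMapInv [HopfAlgebra R A] : A ⊗[R] A →ₗ[R] A ⊗[R] A :=
  (LinearMap.mul' R A ∘ₗ (antipode R).rTensor A).lTensor A ∘ₗ
    (TensorProduct.assoc R A A A).toLinearMap ∘ₗ comul.rTensor A

variable {R A}

theorem canonicalMap_tmul [Bialgebra R A] {a : A} (r : Repr R a ι) (b : A) :
    canonicalMap R A (a ⊗ₜ b) = ∑ i ∈ r.index, r.left i ⊗ₜ (r.right i * b) := by
  simp [canonicalMap, ← r.eq, sum_tmul]

variable [HopfAlgebra R A]

theorem canonicalMapInv_tmul {a : A} (r : Repr R a ι) (b : A) :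
    canonicalMapInv R A (a ⊗ₜ b) = ∑ i ∈ r.index, r.left i ⊗ₜ (antipode R (r.right i) * b) := by
  simp [canonicalMapInv, ← r.eq, sum_tmul]

theorem canonicalMapInv_comul (a : A) : canonicalMapInv R A (comul a) = a ⊗ₜ 1 := by
  let r := ℛ R a
  rw [← sum_tmul_apply_tmul_eq (g := LinearMap.mul' R A ∘ₗ (antipode R).rTensor A) (m := 1)
    (fun b => by simp [Algebra.smul_def]) r fun i => ℛ R (r.left i), ← r.eq]
  simp [canonicalMapInv_tmul (ℛ R _)]

theorem canonicalMap_canonicalMapInv (t : A ⊗[R] A) :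
    canonicalMap R A (canonicalMapInv R A t) = t := by
  induction t using TensorProduct.induction_on with
  | zero => simp
  | add t t' ht ht' => simp [ht, ht']
  | tmul a b =>
    let r := ℛ R a
    rw [canonicalMapInv_tmul r, ← sum_tmul_apply_tmul_eq (g := LinearMap.mulRight R b ∘ₗ
      LinearMap.mul' R A ∘ₗ (antipode R).lTensor A) (m := b)
      (fun c => by simp [Algebra.smul_def]) r fun i => ℛ R (r.left i)]
    simp [canonicalMap_tmul (ℛ R _), mul_assoc]

end HopfAlgebra

open Coalgebra HopfAlgebra

def smulEvalMul (ψ : H →ₗ[k] N) : (H ⊗[k] H) ⊗[k] H →ₗ[k] N :=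
  TensorProduct.lift <| TensorProduct.lift <|
    (LinearMap.llcomp k H N N).flip.compl₂ (csmul k H N) ∘ₗ LinearMap.llcomp k H H N ψ ∘ₗ
      (LinearMap.mul k H).flip

section

variable {k H N}

@[simp]
theorem smulEvalMul_tmul (ψ : H →ₗ[k] N) (a b d : H) :
    smulEvalMul k H N ψ (a ⊗ₜ b ⊗ₜ d) = b • ψ (d * a) := by
  simp [smulEvalMul, csmul]

@[simp]
theorem sigmaMap_apply (n : N) (h : H) : sigmaMap k H N n h = h • n := rfl

theorem Mmap_apply {W : Type} [AddCommGroup W] [Module k W] (Φ : H →ₗ[k] H →ₗ[k] W) (h : H) :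
    Mmap k H W Φ h = TensorProduct.lift Φ (comul h) := by
  show TensorProduct.lift LinearMap.id (Φ.rTensor H (comul h)) = _
  rw [← LinearMap.comp_apply (TensorProduct.lift LinearMap.id)]
  congr 1
  ext
  rfl

theorem hAct_apply (x : H) (ψ : H →ₗ[k] N) (h : H) :
    hAct k H N x ψ h = smulEvalMul k H N ψ (comul.rTensor H (canonicalMapInv k H (x ⊗ₜ h))) := by
  let r := ℛ k x
  simp only [hAct, deltaSH, canonicalMapInv, LinearMap.comp_apply, LinearMap.rTensor_tmul]
  rw [← r.eq]
  simp only [map_sum, sum_tmul, LinearMap.sum_apply]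
  refine Finset.sum_congr rfl fun i _ => ?_
  simp only [LinearMap.rTensor_tmul, LinearEquiv.coe_coe, TensorProduct.assoc_tmul,
    LinearMap.lTensor_tmul]
  rw [← (ℛ k (r.left i)).eq]
  simp [sum_tmul, sandwichHom, sandwich, csmul, mul_assoc]

theorem smulEvalMul_sigmaMap_rTensor_comul (n : N) (t : H ⊗[k] H) :
    smulEvalMul k H N (sigmaMap k H N n) (comul.rTensor H t) =
      sigmaMap k H N n (LinearMap.mul' k H (TensorProduct.comm k H H (canonicalMap k H t))) := by
  induction t using TensorProduct.induction_on with
  | zero => simp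
  | add t t' ht ht' => simp only [map_add, ht, ht']
  | tmul c d =>
    rw [canonicalMap_tmul (ℛ k c), LinearMap.rTensor_tmul, ← (ℛ k c).eq]
    simp [sum_tmul, smul_smul, mul_assoc]

theorem smulEvalMul_rTensor_comul_tmul_one (φ : H →ₗ[k] N) (y : H) :
    smulEvalMul k H N φ (comul.rTensor H (y ⊗ₜ 1)) = diagExpr k H N φ y := by
  simp only [diagExpr, LinearMap.comp_apply, LinearMap.rTensor_tmul]
  rw [← (ℛ k y).eq]
  simp [sum_tmul, csmul]

theorem sigmaMap_smul (x : H) (n : N) :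
    sigmaMap k H N (x • n) = hAct k H N x (sigmaMap k H N n) := by
  ext h
  rw [hAct_apply, smulEvalMul_sigmaMap_rTensor_comul, canonicalMap_canonicalMapInv]
  simp [mul_smul]

theorem Mmap_flip_hAct (φ : H →ₗ[k] N) :
    Mmap k H N ((hAct k H N).flip φ) = diagExpr k H N φ := by
  have lift_eq : TensorProduct.lift ((hAct k H N).flip φ) =
      smulEvalMul k H N φ ∘ₗ comul.rTensor H ∘ₗ canonicalMapInv k H := by
    ext x h
    simp [hAct_apply]
  ext y
  rw [Mmap_apply, lift_eq, LinearMap.comp_apply, LinearMap.comp_apply, canonicalMapInv_comul,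
    smulEvalMul_rTensor_comul_tmul_one]

theorem Mmap_sigmaMap_comp (φ : H →ₗ[k] N) :
    Mmap k H N (sigmaMap k H N ∘ₗ φ) = diagExpr k H N φ := by
  ext y
  simp only [Mmap_apply, diagExpr, LinearMap.comp_apply]
  rw [← (ℛ k y).eq]
  simp [csmul]

end

theorem stmt10 :
    -- (i) `ς` is `H`-linear
    (∀ (x : H) (n : N), sigmaMap k H N (x • n) = hAct k H N x (sigmaMap k H N n))
    -- (ii) `ς` is central with respect to `m`, both sides being `h ↦ h⁽²⁾ • φ(h⁽¹⁾)`
    ∧ (∀ φ : H →ₗ[k] N,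
        Mmap k H N ((hAct k H N).flip φ) = diagExpr k H N φ
        ∧ Mmap k H N (sigmaMap k H N ∘ₗ φ) = diagExpr k H N φ) :=
  ⟨sigmaMap_smul, fun φ => ⟨Mmap_flip_hAct φ, Mmap_sigmaMap_comp φ⟩⟩

end
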